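/- Let X_1,…,X_n be iid from cdf F_X and Y_1,…,Y_n iid from cdf F_Y, where F_X, F_Y are continuous, strictly increasing, with finite second moments. Suppose there exists c ∈ ℝ with F_X(x) > F_Y(x) for all x > c. Then for arbitrarily small ε > 0 there is a nonnegative constant K_ε independent of n such that ε(F_{X_{n:n}}, F_{Y_{n:n}}) ≤ K_ε · (F_Y(c)/(1−ε))^{n−1}, where X_{n:n}, Y_{n:n} are the sample maxima with cdfs F_X^n, F_Y^n. Consequently ε(F_{X_{n:n}}, F_{Y_{n:n}}) → 0 as n → ∞. -/

import Mathlib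

open MeasureTheory Set Filter

/-- Left-continuous inverse (quantile function) of a cdf. -/
noncomputable def linv (F : ℝ → ℝ) (u : ℝ) : ℝ := sInf {x : ℝ | u ≤ F x}

/-- Squared L₂-Wasserstein distance between two cdfs, via quantile functions. -/
noncomputable def W2sq (F G : ℝ → ℝ) : ℝ :=
  ∫ u in Set.Ioo (0:ℝ) 1, (linv F u - linv G u) ^ 2

/-- Measure of departure from the usual stochastic order, with the convention
`ε = 0` when `W₂ = 0`. -/
noncomputable def eps (F G : ℝ → ℝ) : ℝ :=
  if W2sq F G = 0 then 0
  else (∫ u in {u ∈ Set.Ioo (0:ℝ) 1 | linv G u < linv F u},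
          (linv F u - linv G u) ^ 2) / W2sq F G

/-!
Write `Δ = F_X⁻¹ - F_Y⁻¹` for the difference of quantile functions. The quantile function of
`Fⁿ` is `u ↦ F⁻¹(u^{1/n})`, so the substitution `u = vⁿ` turns both integrals defining
`ε(F_Xⁿ, F_Yⁿ)` into integrals of `n v^{n-1} Δ(v)²` over `(0, 1)`. Above `q = F_Y(c)` the
quantiles cross (`Δ < 0`), so the numerator lives on `(0, q]` and is at most
`n q^{n-1} ∫₀¹ Δ²`. For any `v₀ ∈ (q, 1)` the denominator is at least
`n v₀^{n-1} ∫_{v₀}^1 Δ²`, and this last integral is positive. The factor `n` cancels, leaving `K (q / v₀)^{n-1}`.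
-/

open scoped Topology

lemma image_pow_Ioo_zero_one {n : ℕ} (hn : n ≠ 0) :
    (fun v : ℝ => v ^ n) '' Ioo 0 1 = Ioo 0 1 := by
  refine Subset.antisymm ?_ ?_
  · rintro _ ⟨v, hv, rfl⟩
    exact ⟨pow_pos hv.1 n, pow_lt_one₀ hv.1.le hv.2 hn⟩
  · simpa [zero_pow hn] using
      intermediate_value_Ioo (zero_le_one (α := ℝ)) (continuous_pow n).continuousOn

lemma setIntegral_image_pow {n : ℕ} (hn : n ≠ 0) {s : Set ℝ} (hs : MeasurableSet s)
    (hs0 : s ⊆ Ici 0) (g : ℝ → ℝ) :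
    ∫ u in (fun v => v ^ n) '' s, g u = ∫ v in s, n * v ^ (n - 1) * g (v ^ n) := by
  rw [integral_image_eq_integral_abs_deriv_smul hs
    (fun v _ => (hasDerivAt_pow n v).hasDerivWithinAt)
    ((pow_left_strictMonoOn₀ hn).injOn.mono hs0)]
  refine setIntegral_congr_fun hs fun v hv => ?_
  have : 0 ≤ v := hs0 hv
  rw [smul_eq_mul, abs_of_nonneg (by positivity)]

lemma integrableOn_mul_pow_mul_Ioo {h : ℝ → ℝ} (hh : IntegrableOn h (Ioo 0 1)) (c : ℝ)
    (k : ℕ) : IntegrableOn (fun v => c * v ^ k * h v) (Ioo 0 1) := by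
  refine hh.bdd_mul (c := |c|)
    (by fun_prop : Continuous fun v : ℝ => c * v ^ k).aestronglyMeasurable
    ((ae_restrict_iff' measurableSet_Ioo).2 (Eventually.of_forall fun v hv => ?_))
  rw [norm_mul, norm_pow, Real.norm_eq_abs, Real.norm_eq_abs, abs_of_pos hv.1]
  exact mul_le_of_le_one_right (abs_nonneg c) (pow_le_one₀ hv.1.le hv.2.le)

lemma setIntegral_mul_pow_mul_le {s t : Set ℝ} {h : ℝ → ℝ} {c q : ℝ} {k : ℕ}
    (hc : 0 ≤ c) (hq : 0 ≤ q) (hs : MeasurableSet s) (hst : s ⊆ t) (hsq : s ⊆ Icc 0 q)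
    (hh : IntegrableOn h t) (hh0 : ∀ v, 0 ≤ h v) :
    ∫ v in s, c * v ^ k * h v ≤ c * q ^ k * ∫ v in t, h v := calc
  ∫ v in s, c * v ^ k * h v ≤ ∫ v in s, c * q ^ k * h v := by
    refine integral_mono_of_nonneg
      ((ae_restrict_iff' hs).2 (Eventually.of_forall fun v hv => ?_))
      ((hh.mono_set hst).const_mul _)
      ((ae_restrict_iff' hs).2 (Eventually.of_forall fun v hv => ?_))
    · have := (hsq hv).1
      exact mul_nonneg (by positivity) (hh0 v)
    · have hv' := hsq hv
      have := hh0 v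
      dsimp only
      gcongr
      exacts [hv'.1, hv'.2]
  _ = c * q ^ k * ∫ v in s, h v := integral_const_mul _ _
  _ ≤ c * q ^ k * ∫ v in t, h v :=
    mul_le_mul_of_nonneg_left (setIntegral_mono_set hh (Eventually.of_forall hh0) hst.eventuallyLE)
      (by positivity)

lemma mul_pow_mul_setIntegral_le {s : Set ℝ} {h : ℝ → ℝ} {c a : ℝ} {k : ℕ}
    (hc : 0 ≤ c) (ha : 0 ≤ a) (hs : MeasurableSet s) (hs01 : s ⊆ Ioo 0 1) (hsa : s ⊆ Ici a)
    (hh : IntegrableOn h (Ioo 0 1)) (hh0 : ∀ v, 0 ≤ h v) :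
    c * a ^ k * ∫ v in s, h v ≤ ∫ v in Ioo 0 1, c * v ^ k * h v := calc
  c * a ^ k * ∫ v in s, h v = ∫ v in s, c * a ^ k * h v := (integral_const_mul _ _).symm
  _ ≤ ∫ v in s, c * v ^ k * h v := by
    refine setIntegral_mono_on ((hh.mono_set hs01).const_mul _)
      ((integrableOn_mul_pow_mul_Ioo hh c k).mono_set hs01) hs fun v hv => ?_
    have : a ≤ v := hsa hv
    have := hh0 v
    gcongr
  _ ≤ ∫ v in Ioo 0 1, c * v ^ k * h v := by
    refine setIntegral_mono_set (integrableOn_mul_pow_mul_Ioo hh c k)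
      ((ae_restrict_iff' measurableSet_Ioo).2 (Eventually.of_forall fun v hv => ?_))
      hs01.eventuallyLE
    have := hv.1
    exact mul_nonneg (by positivity) (hh0 v)

lemma eps_nonneg (F G : ℝ → ℝ) : 0 ≤ eps F G := by
  unfold eps
  split_ifs
  · exact le_rfl
  · exact div_nonneg (integral_nonneg fun _ => sq_nonneg _) (integral_nonneg fun _ => sq_nonneg _)

lemma eps_le_div {F G : ℝ → ℝ} {a b : ℝ}
    (ha : ∫ u in {u ∈ Ioo (0 : ℝ) 1 | linv G u < linv F u}, (linv F u - linv G u) ^ 2 ≤ a)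
    (hb : 0 < b) (hbW : b ≤ W2sq F G) : eps F G ≤ a / b := by
  rw [eps, if_neg (hb.trans_le hbW).ne']
  exact div_le_div₀ ((integral_nonneg fun _ => sq_nonneg _).trans ha) ha hb hbW

structure IsContStrictCDF (F : ℝ → ℝ) : Prop where
  continuous : Continuous F
  strictMono : StrictMono F
  tendsto_atBot : Tendsto F atBot (𝓝 0)
  tendsto_atTop : Tendsto F atTop (𝓝 1)

lemma linv_eq_of_apply_eq {F : ℝ → ℝ} (hF : StrictMono F) {x u : ℝ} (hx : F x = u) :
    linv F u = x := by
  have hset : {y : ℝ | u ≤ F y} = Ici x := by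
    ext y
    simp only [mem_ofPred_eq, mem_Ici, ← hx, hF.le_iff_le]
  rw [linv, hset, csInf_Ici]

namespace IsContStrictCDF

variable {F G : ℝ → ℝ}

lemma pos (hF : IsContStrictCDF F) (x : ℝ) : 0 < F x :=
  lt_of_le_of_lt
    (le_of_tendsto hF.tendsto_atBot
      (eventually_atBot.2 ⟨x - 1, fun _ hy => hF.strictMono.monotone hy⟩))
    (hF.strictMono (sub_one_lt x))

lemma lt_one (hF : IsContStrictCDF F) (x : ℝ) : F x < 1 :=
  lt_of_lt_of_le (hF.strictMono (lt_add_one x))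
    (ge_of_tendsto hF.tendsto_atTop
      (eventually_atTop.2 ⟨x + 1, fun _ hy => hF.strictMono.monotone hy⟩))

lemma mem_Ioo (hF : IsContStrictCDF F) (x : ℝ) : F x ∈ Ioo (0 : ℝ) 1 :=
  ⟨hF.pos x, hF.lt_one x⟩

lemma apply_linv (hF : IsContStrictCDF F) {u : ℝ} (hu : u ∈ Ioo (0 : ℝ) 1) :
    F (linv F u) = u := by
  obtain ⟨a, ha⟩ := (hF.tendsto_atBot.eventually (eventually_lt_nhds hu.1)).exists
  obtain ⟨b, hb⟩ := (hF.tendsto_atTop.eventually (eventually_gt_nhds hu.2)).exists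
  obtain ⟨x, hx⟩ := intermediate_value_univ a b hF.continuous ⟨ha.le, hb.le⟩
  rw [linv_eq_of_apply_eq hF.strictMono hx, hx]

lemma linv_apply (hF : IsContStrictCDF F) (x : ℝ) : linv F (F x) = x :=
  linv_eq_of_apply_eq hF.strictMono rfl

lemma continuousOn_linv (hF : IsContStrictCDF F) : ContinuousOn (linv F) (Ioo 0 1) := by
  have hmono : MonotoneOn (linv F) (Ioo 0 1) := fun u hu v hv huv => by
    rw [← hF.strictMono.le_iff_le, hF.apply_linv hu, hF.apply_linv hv]
    exact huv
  have himage : linv F '' Ioo 0 1 = univ :=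
    eq_univ_of_forall fun x => ⟨F x, hF.mem_Ioo x, hF.linv_apply x⟩
  refine fun u hu => (continuousAt_of_monotoneOn_of_image_mem_nhds hmono
    (isOpen_Ioo.mem_nhds hu) ?_).continuousWithinAt
  rw [himage]
  exact univ_mem

lemma linv_pow_apply_pow (hF : IsContStrictCDF F) {n : ℕ} (hn : n ≠ 0) {v : ℝ}
    (hv : v ∈ Ioo (0 : ℝ) 1) : linv (fun x => F x ^ n) (v ^ n) = linv F v := by
  refine linv_eq_of_apply_eq (fun x y hxy => ?_) (by rw [hF.apply_linv hv])
  exact pow_lt_pow_left₀ (hF.strictMono hxy) (hF.pos x).le hn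

lemma linv_lt_linv_of_lt (hF : IsContStrictCDF F) (hG : IsContStrictCDF G) {c : ℝ}
    (hc : ∀ x, c < x → G x < F x) {v : ℝ} (hv : v ∈ Ioo (0 : ℝ) 1) (hcv : G c < v) :
    linv F v < linv G v := by
  have hc' : c < linv G v := by rwa [← hG.strictMono.lt_iff_lt, hG.apply_linv hv]
  rw [← hF.strictMono.lt_iff_lt, hF.apply_linv hv]
  simpa only [hG.apply_linv hv] using hc _ hc'

end IsContStrictCDF

section Quantiles

variable {F G : ℝ → ℝ}

lemma isOpen_sep_linv_lt (hF : IsContStrictCDF F) (hG : IsContStrictCDF G) :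
    IsOpen {v ∈ Ioo (0 : ℝ) 1 | linv G v < linv F v} :=
  (hG.continuousOn_linv.prodMk hF.continuousOn_linv).isOpen_inter_preimage isOpen_Ioo
    (isOpen_lt continuous_fst continuous_snd)

lemma setIntegral_sq_sub_linv_pow (hF : IsContStrictCDF F) (hG : IsContStrictCDF G) {n : ℕ}
    (hn : n ≠ 0) {T : Set ℝ} (hT : MeasurableSet (Ioo 0 1 ∩ (fun v => v ^ n) ⁻¹' T)) :
    ∫ u in Ioo 0 1 ∩ T, (linv (fun x => F x ^ n) u - linv (fun x => G x ^ n) u) ^ 2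
      = ∫ v in Ioo 0 1 ∩ (fun v => v ^ n) ⁻¹' T,
          n * v ^ (n - 1) * (linv F v - linv G v) ^ 2 := by
  conv_lhs => rw [← image_pow_Ioo_zero_one hn, ← image_inter_preimage]
  rw [setIntegral_image_pow hn hT fun v hv => hv.1.1.le]
  refine setIntegral_congr_fun hT fun v hv => ?_
  simp only [hF.linv_pow_apply_pow hn hv.1, hG.linv_pow_apply_pow hn hv.1]

lemma W2sq_pow (hF : IsContStrictCDF F) (hG : IsContStrictCDF G) {n : ℕ} (hn : n ≠ 0) :
    W2sq (fun x => F x ^ n) (fun x => G x ^ n)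
      = ∫ v in Ioo 0 1, n * v ^ (n - 1) * (linv F v - linv G v) ^ 2 := by
  simpa only [W2sq, inter_univ, preimage_univ] using
    setIntegral_sq_sub_linv_pow hF hG hn (T := univ) (by simp)

lemma setIntegral_sep_linv_pow_lt (hF : IsContStrictCDF F) (hG : IsContStrictCDF G) {n : ℕ}
    (hn : n ≠ 0) :
    ∫ u in {u ∈ Ioo (0 : ℝ) 1 | linv (fun x => G x ^ n) u < linv (fun x => F x ^ n) u},
        (linv (fun x => F x ^ n) u - linv (fun x => G x ^ n) u) ^ 2
      = ∫ v in {v ∈ Ioo (0 : ℝ) 1 | linv G v < linv F v},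
        n * v ^ (n - 1) * (linv F v - linv G v) ^ 2 := by
  have hpre : Ioo 0 1 ∩ (fun v => v ^ n) ⁻¹'
        {u | linv (fun x => G x ^ n) u < linv (fun x => F x ^ n) u}
      = {v ∈ Ioo (0 : ℝ) 1 | linv G v < linv F v} := by
    ext v
    refine and_congr_right fun hv => ?_
    simp only [mem_preimage, mem_ofPred_eq, hF.linv_pow_apply_pow hn hv,
      hG.linv_pow_apply_pow hn hv]
  rw [← hpre]
  exact setIntegral_sq_sub_linv_pow hF hG hn (hpre ▸ (isOpen_sep_linv_lt hF hG).measurableSet)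

lemma integrableOn_sq_sub_linv (hF : IsContStrictCDF F) (hG : IsContStrictCDF G)
    (hmomF : IntegrableOn (fun u => linv F u ^ 2) (Ioo 0 1))
    (hmomG : IntegrableOn (fun u => linv G u ^ 2) (Ioo 0 1)) :
    IntegrableOn (fun u => (linv F u - linv G u) ^ 2) (Ioo 0 1) := by
  have hF' := hF.continuousOn_linv.aestronglyMeasurable (μ := volume) measurableSet_Ioo
  have hG' := hG.continuousOn_linv.aestronglyMeasurable (μ := volume) measurableSet_Ioo
  exact (memLp_two_iff_integrable_sq (hF'.sub hG')).1
    (((memLp_two_iff_integrable_sq hF').2 hmomF).sub ((memLp_two_iff_integrable_sq hG').2 hmomG))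

lemma setIntegral_sq_sub_linv_pos (hF : IsContStrictCDF F) (hG : IsContStrictCDF G) {c : ℝ}
    (hc : ∀ x, c < x → G x < F x)
    (hint : IntegrableOn (fun u => (linv F u - linv G u) ^ 2) (Ioo 0 1))
    {v₀ : ℝ} (hv₀ : v₀ ∈ Ioo (G c) 1) :
    0 < ∫ v in Ioo v₀ 1, (linv F v - linv G v) ^ 2 := by
  have hsub : Ioo v₀ 1 ⊆ Ioo 0 1 := Ioo_subset_Ioo_left ((hG.pos c).trans hv₀.1).le
  rw [setIntegral_pos_iff_support_of_nonneg_ae (Eventually.of_forall fun _ => sq_nonneg _)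
    (hint.mono_set hsub)]
  have hsupp : Function.support (fun u => (linv F u - linv G u) ^ 2) ∩ Ioo v₀ 1 = Ioo v₀ 1 :=
    inter_eq_right.2 fun v hv => pow_ne_zero 2 (sub_ne_zero.2
      (hF.linv_lt_linv_of_lt hG hc (hsub hv) (hv₀.1.trans hv.1)).ne)
  rw [hsupp, Real.volume_Ioo]
  simpa using hv₀.2

theorem eps_pow_le_mul_div_pow (hF : IsContStrictCDF F) (hG : IsContStrictCDF G)
    (hmomF : IntegrableOn (fun u => linv F u ^ 2) (Ioo 0 1))
    (hmomG : IntegrableOn (fun u => linv G u ^ 2) (Ioo 0 1))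
    {c : ℝ} (hc : ∀ x, c < x → G x < F x) {v₀ : ℝ} (hv₀ : v₀ ∈ Ioo (G c) 1) :
    ∃ K ≥ (0 : ℝ), ∀ n : ℕ, 1 ≤ n →
      eps (fun x => F x ^ n) (fun x => G x ^ n) ≤ K * (G c / v₀) ^ (n - 1) := by
  have hq := hG.pos c
  have hv₀0 : 0 < v₀ := hq.trans hv₀.1
  have hint := integrableOn_sq_sub_linv hF hG hmomF hmomG
  set C := ∫ v in Ioo 0 1, (linv F v - linv G v) ^ 2
  set I := ∫ v in Ioo v₀ 1, (linv F v - linv G v) ^ 2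
  have hI : 0 < I := setIntegral_sq_sub_linv_pos hF hG hc hint hv₀
  refine ⟨C / I, div_nonneg (integral_nonneg fun _ => sq_nonneg _) hI.le, fun n hn => ?_⟩
  have hn0 : n ≠ 0 := by omega
  have hnum := setIntegral_mul_pow_mul_le (k := n - 1) (Nat.cast_nonneg n) hq.le
    (isOpen_sep_linv_lt hF hG).measurableSet (sep_subset _ _)
    (fun v hv => ⟨hv.1.1.le,
      le_of_not_gt fun hcv => (hF.linv_lt_linv_of_lt hG hc hv.1 hcv).not_gt hv.2⟩)
    hint fun _ => sq_nonneg _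
  have hden := mul_pow_mul_setIntegral_le (k := n - 1) (Nat.cast_nonneg n) hv₀0.le
    measurableSet_Ioo (Ioo_subset_Ioo_left hv₀0.le) (fun v hv => hv.1.le) hint
    fun _ => sq_nonneg _
  rw [← setIntegral_sep_linv_pow_lt hF hG hn0] at hnum
  rw [← W2sq_pow hF hG hn0] at hden
  calc eps _ _ ≤ n * G c ^ (n - 1) * C / (n * v₀ ^ (n - 1) * I) :=
        eps_le_div hnum (by positivity) hden
    _ = C / I * (G c / v₀) ^ (n - 1) := by
        rw [div_pow]
        field_simp

end Quantiles

/-- Largest order statistics: if `F_X(x) > F_Y(x)` for all `x > c`, then for every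
small `ε > 0` there is `K_ε ≥ 0` independent of `n` with
`ε(F_{X_{n:n}},F_{Y_{n:n}}) ≤ K_ε (F_Y(c)/(1-ε))^{n-1}`, where the sample maxima have
cdfs `F_X^n`, `F_Y^n`; consequently `ε(F_{X_{n:n}},F_{Y_{n:n}}) → 0`. -/
theorem stmt14 (FX FY : ℝ → ℝ)
    (hFXc : Continuous FX) (hFYc : Continuous FY)
    (hFXm : StrictMono FX) (hFYm : StrictMono FY)
    (hFX0 : Tendsto FX atBot (nhds 0)) (hFX1 : Tendsto FX atTop (nhds 1))
    (hFY0 : Tendsto FY atBot (nhds 0)) (hFY1 : Tendsto FY atTop (nhds 1))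
    (hmomX : IntegrableOn (fun u => (linv FX u) ^ 2) (Set.Ioo (0:ℝ) 1))
    (hmomY : IntegrableOn (fun u => (linv FY u) ^ 2) (Set.Ioo (0:ℝ) 1))
    (c : ℝ) (hc : ∀ x, c < x → FY x < FX x) :
    (∀ ε ∈ Set.Ioo (0:ℝ) 1, ∃ K ≥ (0:ℝ), ∀ n : ℕ, 1 ≤ n →
      eps (fun x => (FX x) ^ n) (fun x => (FY x) ^ n) ≤ K * (FY c / (1 - ε)) ^ (n - 1)) ∧
    Tendsto (fun n : ℕ => eps (fun x => (FX x) ^ n) (fun x => (FY x) ^ n))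
      atTop (nhds 0) := by
  obtain ⟨hq0, hq1⟩ := (⟨hFYc, hFYm, hFY0, hFY1⟩ : IsContStrictCDF FY).mem_Ioo c
  have bound (v₀ : ℝ) (hv₀ : v₀ ∈ Ioo (FY c) 1) :=
    eps_pow_le_mul_div_pow ⟨hFXc, hFXm, hFX0, hFX1⟩ ⟨hFYc, hFYm, hFY0, hFY1⟩ hmomX hmomY hc
      hv₀
  refine ⟨fun ε hε => ?_, ?_⟩
  · -- `1 - ε` itself may lie below `FY c`; enlarging `v₀` only shrinks `FY c / v₀`.
    obtain ⟨K, hK0, hK⟩ := bound (max (1 - ε) ((FY c + 1) / 2))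
      ⟨lt_max_of_lt_right (by linarith), max_lt (by linarith [hε.1]) (by linarith)⟩
    refine ⟨K, hK0, fun n hn => (hK n hn).trans ?_⟩
    have : 0 < 1 - ε := by linarith [hε.2]
    gcongr
    exact le_max_left _ _
  · obtain ⟨K, -, hK⟩ := bound ((FY c + 1) / 2) ⟨by linarith, by linarith⟩
    have hratio : FY c / ((FY c + 1) / 2) < 1 := (div_lt_one (by linarith)).2 (by linarith)
    have hlim :
        Tendsto (fun n : ℕ => K * (FY c / ((FY c + 1) / 2)) ^ (n - 1)) atTop (𝓝 0) := by
      simpa using ((tendsto_pow_atTop_nhds_zero_of_lt_one (by positivity) hratio).comp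
        (tendsto_sub_atTop_nat 1)).const_mul K
    exact squeeze_zero' (Eventually.of_forall fun _ => eps_nonneg _ _)
      ((eventually_ge_atTop 1).mono hK) hlim
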